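/- (The Clifford torus satisfies the Willmore equation.) Let r > 0 and R = √2 r, and define on ℝ the functions H(v) = (R + 2r cos v)/(2r(R + r cos v)), K(v) = cos v/(r(R + r cos v)), and the Laplace–Beltrami expression Δ_gH(v) = (1/(r(R + r cos v))) · d/dv[ ((R + r cos v)/r) · H'(v) ] (the Laplace–Beltrami operator of the induced metric of the torus of revolution applied to the v-dependent function H). Then for every v ∈ ℝ: Δ_gH(v) + 2 H(v) (H(v)² − K(v)) = 0. -/

import Mathlib

/-! For a torus of revolution one computes `H² − K = R² / (4 r² (R + r cos v)²)` and
`Δ_g H = −R (R cos v + r) / (2 r² (R + r cos v)³)`, so the Willmore expression equals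
`R (R² − 2 r²) / (4 r³ (R + r cos v)³)`. It vanishes identically exactly for the ratio
`R = √2 r` of the Clifford torus. -/

noncomputable section

open Real

/-- Mean curvature of the torus of revolution, as a function of `v`. -/
def Htor (r R v : ℝ) : ℝ := (R + 2 * r * Real.cos v) / (2 * r * (R + r * Real.cos v))

/-- Gaussian curvature of the torus of revolution, as a function of `v`. -/
def Ktor (r R v : ℝ) : ℝ := Real.cos v / (r * (R + r * Real.cos v))

/-- Laplace–Beltrami operator of the induced metric of the torus of revolution,
applied to the (v-dependent) mean curvature. -/
def lapHtor (r R v : ℝ) : ℝ :=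
  (1 / (r * (R + r * Real.cos v))) *
    deriv (fun w => ((R + r * Real.cos w) / r) * deriv (Htor r R) w) v

lemma add_mul_cos_pos {r R : ℝ} (hrR : |r| < R) (w : ℝ) : 0 < R + r * Real.cos w := by
  have h : |r * Real.cos w| ≤ |r| := by
    rw [abs_mul]
    exact mul_le_of_le_one_right (abs_nonneg r) (Real.abs_cos_le_one w)
  linarith [neg_abs_le (r * Real.cos w)]

lemma hasDerivAt_Htor {r R w : ℝ} (hr : r ≠ 0) (hw : R + r * Real.cos w ≠ 0) :
    HasDerivAt (Htor r R) (-R * Real.sin w / (2 * (R + r * Real.cos w) ^ 2)) w := by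
  have hnum : HasDerivAt (fun w => R + 2 * r * Real.cos w) (2 * r * -Real.sin w) w :=
    ((Real.hasDerivAt_cos w).const_mul (2 * r)).const_add R
  have hden : HasDerivAt (fun w => 2 * r * (R + r * Real.cos w)) (2 * r * (r * -Real.sin w)) w :=
    (((Real.hasDerivAt_cos w).const_mul r).const_add R).const_mul (2 * r)
  refine (hnum.div hden (by positivity)).congr_deriv ?_
  field_simp
  ring

lemma lapHtor_eq {r R : ℝ} (hr : r ≠ 0) (hrR : |r| < R) (v : ℝ) :
    lapHtor r R v =
      -R * (R * Real.cos v + r) / (2 * r ^ 2 * (R + r * Real.cos v) ^ 3) := by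
  have hflux : (fun w => ((R + r * Real.cos w) / r) * deriv (Htor r R) w)
      = fun w => -R * Real.sin w / (2 * r * (R + r * Real.cos w)) := by
    funext w
    have hw := (add_mul_cos_pos hrR w).ne'
    rw [(hasDerivAt_Htor hr hw).deriv]
    field_simp
  have hv := (add_mul_cos_pos hrR v).ne'
  have hnum : HasDerivAt (fun w => -R * Real.sin w) (-R * Real.cos v) v :=
    (Real.hasDerivAt_sin v).const_mul (-R)
  have hden : HasDerivAt (fun w => 2 * r * (R + r * Real.cos w)) (2 * r * (r * -Real.sin v)) v :=
    (((Real.hasDerivAt_cos v).const_mul r).const_add R).const_mul (2 * r)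
  rw [lapHtor, hflux, (hnum.fun_div hden (by positivity)).deriv]
  field_simp
  linear_combination (-R * r) * Real.sin_sq_add_cos_sq v

lemma Htor_sq_sub_Ktor {r R : ℝ} (hr : r ≠ 0) {v : ℝ} (hv : R + r * Real.cos v ≠ 0) :
    Htor r R v ^ 2 - Ktor r R v = R ^ 2 / (4 * r ^ 2 * (R + r * Real.cos v) ^ 2) := by
  rw [Htor, Ktor]
  field_simp
  ring

lemma willmore_torus_eq {r R : ℝ} (hr : r ≠ 0) (hrR : |r| < R) (v : ℝ) :
    lapHtor r R v + 2 * Htor r R v * (Htor r R v ^ 2 - Ktor r R v) =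
      R * (R ^ 2 - 2 * r ^ 2) / (4 * r ^ 3 * (R + r * Real.cos v) ^ 3) := by
  have hv := (add_mul_cos_pos hrR v).ne'
  rw [lapHtor_eq hr hrR, Htor_sq_sub_Ktor hr hv, Htor]
  field_simp
  ring

/-- The Clifford torus (`R = √2 r`) satisfies the Willmore equation
`Δ_g H + 2H(H² − K) = 0`. -/
theorem clifford_torus_willmore_equation (r : ℝ) (hr : 0 < r) (R : ℝ)
    (hR : R = Real.sqrt 2 * r) (v : ℝ) :
    lapHtor r R v + 2 * Htor r R v * (Htor r R v ^ 2 - Ktor r R v) = 0 := by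
  have hRsq : R ^ 2 = 2 * r ^ 2 := by
    rw [hR, mul_pow, Real.sq_sqrt zero_le_two]
  have hrR : |r| < R := by
    rw [abs_of_pos hr, hR]
    exact lt_mul_of_one_lt_left hr Real.one_lt_sqrt_two
  rw [willmore_torus_eq hr.ne' hrR, hRsq, sub_self, mul_zero, zero_div]

end
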